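/- Let Λ ⊆ ℤ₊ⁿ be a finite nonempty set, let S₀ ⊆ S ⊆ {1,…,n}, and let F be a nonempty face of N(Λ,S). Suppose there is q = (q_1,…,q_n) ∈ (F*)°|N(Λ,S) with q_j = 0 for every j ∈ S₀ and q_j > 0 for every j ∈ S \ S₀ (no condition on q_j for j ∉ S). Then F = F + ℝ₊^{S₀} (Minkowski sum) and F = N(Λ ∩ F, S₀). -/

import Mathlib

/-!
Let `ρ` be the value of the normal `q` on `F`, so that `F` is the part of `P = N(Λ, S)` on the
hyperplane `⟪q, ·⟫ = ρ` and `⟪q, ·⟫ ≥ ρ` on `P`. Since `⟪q, ·⟫` is linear, a convex combination of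
points of `Λ + ℝ₊^S` lies on that hyperplane only if every point with positive weight does, so
`F` is the convex hull of the points of `Λ + ℝ₊^S` on the hyperplane. The sign conditions on `q`
make `⟪q, v⟫ ≥ 0` on `ℝ₊^S` with equality exactly on `ℝ₊^{S₀}`, hence a point `a + v` lies on the
hyperplane iff `a ∈ F` and `v ∈ ℝ₊^{S₀}`. This gives `F = N(Λ ∩ F, S₀)`, and `F = F + ℝ₊^{S₀}`
follows because `ℝ₊^{S₀}` is a convex cone.
-/

open scoped RealInnerProductSpace Pointwise

noncomputable section

/-- A subset `F ⊆ P` is a face of `P` if there are `q ∈ ℝⁿ` and `ρ ∈ ℝ` with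
`⟨q, u⟩ = ρ` for every `u ∈ F` and `ρ < ⟨q, y⟩` for every `y ∈ P \ F`. -/
def IsFace {n : ℕ} (P F : Set (EuclideanSpace ℝ (Fin n))) : Prop :=
  F ⊆ P ∧ ∃ (q : EuclideanSpace ℝ (Fin n)) (ρ : ℝ),
    (∀ u ∈ F, ⟪q, u⟫ = ρ) ∧ ∀ y ∈ P \ F, ρ < ⟪q, y⟫

/-- The interior `(F*)°|P` of the cone of a face `F` of `P`. -/
def coneInterior {n : ℕ} (P F : Set (EuclideanSpace ℝ (Fin n))) :
    Set (EuclideanSpace ℝ (Fin n)) :=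
  {q | q ≠ 0 ∧ ∃ ρ : ℝ, (∀ u ∈ F, ⟪q, u⟫ = ρ) ∧ ∀ y ∈ P \ F, ρ < ⟪q, y⟫}

/-- The embedding of `ℤ₊ⁿ` into `ℝⁿ`. -/
def toR {n : ℕ} (m : Fin n → ℕ) : EuclideanSpace ℝ (Fin n) := WithLp.toLp 2 (fun j => (m j : ℝ))

/-- `ℝ₊^S = {u ∈ ℝⁿ : uⱼ ≥ 0 for j ∈ S and uⱼ = 0 for j ∉ S}`. -/
def RplusS {n : ℕ} (S : Set (Fin n)) : Set (EuclideanSpace ℝ (Fin n)) :=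
  {u | ∀ j, (j ∈ S → 0 ≤ u j) ∧ (j ∉ S → u j = 0)}

/-- The Newton polyhedron `Ch(A + ℝ₊^S)` of a set `A ⊆ ℝⁿ`. -/
def newtonSet {n : ℕ} (A : Set (EuclideanSpace ℝ (Fin n))) (S : Set (Fin n)) :
    Set (EuclideanSpace ℝ (Fin n)) :=
  convexHull ℝ (A + RplusS S)

/-- The Newton polyhedron `N(Ω, S) = Ch(Ω + ℝ₊^S)` of `Ω ⊆ ℤ₊ⁿ`. -/
def newton {n : ℕ} (Ω : Set (Fin n → ℕ)) (S : Set (Fin n)) :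
    Set (EuclideanSpace ℝ (Fin n)) :=
  newtonSet (toR '' Ω) S

open Set

theorem convexHull_inter_level_eq {E : Type*} [AddCommGroup E] [Module ℝ E] (f : E →ₗ[ℝ] ℝ)
    {X : Set E} {ρ : ℝ} (hX : ∀ x ∈ X, ρ ≤ f x) :
    convexHull ℝ X ∩ {y | f y = ρ} = convexHull ℝ (X ∩ {x | f x = ρ}) := by
  refine subset_antisymm ?_ <| convexHull_min (fun x hx => ⟨subset_convexHull ℝ X hx.1, hx.2⟩)
    ((convex_convexHull ℝ X).inter (convex_hyperplane f.isLinear ρ))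
  rintro _ ⟨hx, hfx⟩
  rw [convexHull_eq, mem_ofPred_eq] at hx
  obtain ⟨ι, t, w, z, hw₀, hw₁, hz, rfl⟩ := hx
  have hsum : ∑ i ∈ t, w i * (f (z i) - ρ) = 0 := by
    simp only [mem_ofPred_eq, Finset.centerMass_eq_of_sum_1 t z hw₁, map_sum, map_smul,
      smul_eq_mul] at hfx
    simp only [mul_sub, Finset.sum_sub_distrib, ← Finset.sum_mul, hfx, hw₁, one_mul, sub_self]
  have hlevel : ∀ i ∈ t, w i ≠ 0 → f (z i) = ρ := fun i hi hwi => by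
    have := (Finset.sum_eq_zero_iff_of_nonneg fun j hj =>
      mul_nonneg (hw₀ j hj) (sub_nonneg.2 (hX _ (hz j hj)))).1 hsum i hi
    exact sub_eq_zero.1 ((mul_eq_zero.1 this).resolve_left hwi)
  classical
  rw [← Finset.centerMass_filter_ne_zero]
  refine Finset.centerMass_mem_convexHull _ (fun i hi => hw₀ i (Finset.mem_filter.1 hi).1)
    (by rw [Finset.sum_filter_ne_zero, hw₁]; exact one_pos) fun i hi => ?_
  obtain ⟨hit, hwi⟩ := Finset.mem_filter.1 hi
  exact ⟨hz i hit, hlevel i hit hwi⟩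

section

variable {n : ℕ}

theorem exists_level_of_mem_coneInterior {P F : Set (EuclideanSpace ℝ (Fin n))}
    {q : EuclideanSpace ℝ (Fin n)} (hFP : F ⊆ P) (hq : q ∈ coneInterior P F) :
    ∃ ρ : ℝ, F = P ∩ {y | ⟪q, y⟫ = ρ} ∧ ∀ y ∈ P, ρ ≤ ⟪q, y⟫ := by
  obtain ⟨-, ρ, hF, hP⟩ := hq
  refine ⟨ρ, subset_antisymm (fun y hy => ⟨hFP hy, hF y hy⟩) ?_, fun y hy => ?_⟩
  · rintro y ⟨hyP, hy⟩
    by_contra h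
    exact (hP y ⟨hyP, h⟩).ne hy.symm
  · by_cases h : y ∈ F
    exacts [(hF y h).ge, (hP y ⟨hy, h⟩).le]

theorem zero_mem_RplusS (S : Set (Fin n)) : (0 : EuclideanSpace ℝ (Fin n)) ∈ RplusS S :=
  fun _ => ⟨fun _ => le_rfl, fun _ => rfl⟩

theorem RplusS_mono {S₀ S : Set (Fin n)} (hS : S₀ ⊆ S) : RplusS S₀ ⊆ RplusS S := by
  intro v hv j
  refine ⟨fun hj => ?_, fun hj => (hv j).2 fun hj₀ => hj (hS hj₀)⟩
  by_cases hj₀ : j ∈ S₀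
  exacts [(hv j).1 hj₀, ((hv j).2 hj₀).ge]

theorem convex_RplusS (S : Set (Fin n)) : Convex ℝ (RplusS S) := by
  intro x hx y hy a b ha hb _ j
  simp only [PiLp.add_apply, PiLp.smul_apply, smul_eq_mul]
  exact ⟨fun hj => add_nonneg (mul_nonneg ha ((hx j).1 hj)) (mul_nonneg hb ((hy j).1 hj)),
    fun hj => by rw [(hx j).2 hj, (hy j).2 hj, mul_zero, mul_zero, add_zero]⟩

theorem RplusS_add_RplusS (S : Set (Fin n)) : RplusS S + RplusS S = RplusS S := by
  refine subset_antisymm ?_ fun v hv => ⟨v, hv, 0, zero_mem_RplusS S, add_zero v⟩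
  rintro _ ⟨u, hu, v, hv, rfl⟩ j
  simp only [PiLp.add_apply]
  exact ⟨fun hj => add_nonneg ((hu j).1 hj) ((hv j).1 hj),
    fun hj => by rw [(hu j).2 hj, (hv j).2 hj, add_zero]⟩

theorem subset_newtonSet (A : Set (EuclideanSpace ℝ (Fin n))) (S : Set (Fin n)) :
    A ⊆ newtonSet A S :=
  fun a ha => subset_convexHull ℝ _ ⟨a, ha, 0, zero_mem_RplusS S, add_zero a⟩

theorem newtonSet_add_RplusS (A : Set (EuclideanSpace ℝ (Fin n))) (S : Set (Fin n)) :
    newtonSet A S + RplusS S = newtonSet A S := by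
  rw [newtonSet, ← (convex_RplusS S).convexHull_eq, ← convexHull_add,
    (convex_RplusS S).convexHull_eq, add_assoc, RplusS_add_RplusS]

theorem inner_eq_sum_mul (q v : EuclideanSpace ℝ (Fin n)) : ⟪q, v⟫ = ∑ j, q j * v j := by
  simp [PiLp.inner_apply, mul_comm]

variable {S S₀ : Set (Fin n)} {q v : EuclideanSpace ℝ (Fin n)}

theorem inner_eq_zero_of_mem_RplusS (hq₀ : ∀ j ∈ S₀, q j = 0) (hv : v ∈ RplusS S₀) :
    ⟪q, v⟫ = 0 := by
  rw [inner_eq_sum_mul]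
  refine Finset.sum_eq_zero fun j _ => ?_
  by_cases hj : j ∈ S₀
  · rw [hq₀ j hj, zero_mul]
  · rw [(hv j).2 hj, mul_zero]

theorem mul_nonneg_of_mem_RplusS (hq : ∀ j ∈ S, 0 ≤ q j) (hv : v ∈ RplusS S) (j : Fin n) :
    0 ≤ q j * v j := by
  by_cases hj : j ∈ S
  · exact mul_nonneg (hq j hj) ((hv j).1 hj)
  · rw [(hv j).2 hj, mul_zero]

theorem inner_nonneg_of_mem_RplusS (hq : ∀ j ∈ S, 0 ≤ q j) (hv : v ∈ RplusS S) :
    0 ≤ ⟪q, v⟫ := by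
  rw [inner_eq_sum_mul]
  exact Finset.sum_nonneg fun j _ => mul_nonneg_of_mem_RplusS hq hv j

theorem mem_RplusS_of_inner_eq_zero (hS : S₀ ⊆ S) (hq : ∀ j ∈ S, 0 ≤ q j)
    (hq_pos : ∀ j ∈ S \ S₀, 0 < q j) (hv : v ∈ RplusS S) (hqv : ⟪q, v⟫ = 0) :
    v ∈ RplusS S₀ := by
  rw [inner_eq_sum_mul, Finset.sum_eq_zero_iff_of_nonneg
    fun j _ => mul_nonneg_of_mem_RplusS hq hv j] at hqv
  refine fun j => ⟨fun hj => (hv j).1 (hS hj), fun hj => ?_⟩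
  by_cases hjS : j ∈ S
  · exact (mul_eq_zero.1 (hqv j (Finset.mem_univ j))).resolve_left (hq_pos j ⟨hjS, hj⟩).ne'
  · exact (hv j).2 hjS

theorem inter_level_add_RplusS {A : Set (EuclideanSpace ℝ (Fin n))} {ρ : ℝ} (hS : S₀ ⊆ S)
    (hq₀ : ∀ j ∈ S₀, q j = 0) (hq_pos : ∀ j ∈ S \ S₀, 0 < q j) (hA : ∀ a ∈ A, ρ ≤ ⟪q, a⟫) :
    A ∩ {y | ⟪q, y⟫ = ρ} + RplusS S₀ = (A + RplusS S) ∩ {y | ⟪q, y⟫ = ρ} := by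
  have hq : ∀ j ∈ S, 0 ≤ q j := fun j hj => by
    by_cases hj₀ : j ∈ S₀
    exacts [(hq₀ j hj₀).ge, (hq_pos j ⟨hj, hj₀⟩).le]
  ext x
  constructor
  · rintro ⟨a, ⟨ha, haρ⟩, v, hv, rfl⟩
    refine ⟨add_mem_add ha (RplusS_mono hS hv), ?_⟩
    rw [mem_ofPred_eq, inner_add_right, haρ, inner_eq_zero_of_mem_RplusS hq₀ hv, add_zero]
  · rintro ⟨⟨a, ha, v, hv, rfl⟩, hx⟩
    rw [mem_ofPred_eq, inner_add_right] at hx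
    have hvq := inner_nonneg_of_mem_RplusS hq hv
    have haq := hA a ha
    exact ⟨a, ⟨ha, show ⟪q, a⟫ = ρ by linarith⟩, v,
      mem_RplusS_of_inner_eq_zero hS hq hq_pos hv (by linarith), rfl⟩

end

theorem stmt12_general {n : ℕ} (Λ : Set (Fin n → ℕ))
    (S S₀ : Set (Fin n)) (hS : S₀ ⊆ S)
    (F : Set (EuclideanSpace ℝ (Fin n)))
    (hF : IsFace (newton Λ S) F)
    (q : EuclideanSpace ℝ (Fin n)) (hq : q ∈ coneInterior (newton Λ S) F)
    (hq0 : ∀ j ∈ S₀, q j = 0) (hqpos : ∀ j ∈ S \ S₀, 0 < q j) :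
    F = F + RplusS S₀ ∧ F = newtonSet ((toR '' Λ) ∩ F) S₀ := by
  set A := toR '' Λ
  obtain ⟨ρ, hF_eq, hρ⟩ := exists_level_of_mem_coneInterior hF.1 hq
  have hA : A ⊆ newton Λ S := subset_newtonSet A S
  have hAF : A ∩ F = A ∩ {y | ⟪q, y⟫ = ρ} := by
    rw [hF_eq, ← inter_assoc, inter_eq_left.2 hA]
  have hF_newton : F = newtonSet (A ∩ F) S₀ := by
    rw [hAF, newtonSet, inter_level_add_RplusS hS hq0 hqpos fun a ha => hρ a (hA ha)]
    exact hF_eq.trans <|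
      convexHull_inter_level_eq (innerₗ _ q) fun x hx => hρ x (subset_convexHull ℝ _ hx)
  refine ⟨?_, hF_newton⟩
  calc F = newtonSet (A ∩ F) S₀ + RplusS S₀ := hF_newton.trans (newtonSet_add_RplusS _ _).symm
    _ = F + RplusS S₀ := by rw [← hF_newton]

/-- Representation of unbounded faces: if a nonempty face `F` of `N(Λ,S)` admits a normal
`q ∈ (F*)°` with `qⱼ = 0` for `j ∈ S₀` and `qⱼ > 0` for `j ∈ S \ S₀`, then
`F = F + ℝ₊^{S₀}` and `F = N(Λ ∩ F, S₀)`. -/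
theorem stmt12 {n : ℕ} (Λ : Set (Fin n → ℕ)) (hfin : Λ.Finite) (hne : Λ.Nonempty)
    (S S₀ : Set (Fin n)) (hS : S₀ ⊆ S)
    (F : Set (EuclideanSpace ℝ (Fin n)))
    (hF : IsFace (newton Λ S) F) (hFne : F.Nonempty)
    (q : EuclideanSpace ℝ (Fin n)) (hq : q ∈ coneInterior (newton Λ S) F)
    (hq0 : ∀ j ∈ S₀, q j = 0) (hqpos : ∀ j ∈ S \ S₀, 0 < q j) :
    F = F + RplusS S₀ ∧ F = newtonSet ((toR '' Λ) ∩ F) S₀ :=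
  stmt12_general Λ S S₀ hS F hF q hq hq0 hqpos
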